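/- Run OpConEx for T ≥ 1 iterations with step sizes satisfying condition (C), and let B ≥ 0 be a constant. Then: (i) for every x ∈ X̃, Γ_T·⟨F(x), x̄^T − x⟩ ≤ (γ₀η₀/2)‖x − x⁰‖² + N_T(0); and (ii) Γ_T·‖[g(x̄^T)]_+‖ ≤ (γ₀η₀/2)‖x* − x⁰‖² + (γ₀τ₀/2)(‖λ*‖+1)² + N_T(‖λ*‖+1). -/

import Mathlib

open scoped InnerProductSpace BigOperators

noncomputable section

/-- ℝ^k with the Euclidean norm. -/
abbrev Euc (k : ℕ) := EuclideanSpace ℝ (Fin k)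

/-- `∇g(x)ᵀ d`, where `G j` is the j-th column of `∇g(x)`. -/
def gradT {m : ℕ} {E : Type*} [NormedAddCommGroup E] [InnerProductSpace ℝ E]
    (G : Fin m → E) (d : E) : Euc m :=
  (EuclideanSpace.equiv (Fin m) ℝ).symm fun j => ⟪G j, d⟫_ℝ

/-- `∇g(x) μ`, where `G j` is the j-th column of `∇g(x)`. -/
def gradMul {m : ℕ} {E : Type*} [NormedAddCommGroup E] [InnerProductSpace ℝ E]
    (G : Fin m → E) (μ : Euc m) : E :=
  ∑ j, μ j • G j

/-- componentwise positive part `[v]₊`. -/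
def posPart {m : ℕ} (v : Euc m) : Euc m :=
  (EuclideanSpace.equiv (Fin m) ℝ).symm fun j => max (v j) 0

/-- The quantity `N_T(a)` from Lemma 2.5 (OpConEx working bound with free parameter `B`). -/
def opconexNT {n m : ℕ} (γ η τ θ : ℕ → ℝ) (Lg Hg DX B : ℝ)
    (F : Euc n → Euc n) (x xm : ℕ → Euc n) (lam : ℕ → Euc m)
    (ell ellm : ℕ → Euc m) (T : ℕ) (a : ℝ) : ℝ :=
  (∑ t ∈ Finset.range T,
      (γ t * θ t * ⟪F (x t) - F (xm t), x t - x (t + 1)⟫_ℝ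
        + γ t * θ t * ⟪ell t - ellm t, lam (t + 1) - lam t⟫_ℝ
        - γ t * (η t - B * Lg) / 2 * ‖x (t + 1) - x t‖ ^ 2
        - γ t * τ t / 2 * ‖lam t - lam (t + 1)‖ ^ 2
        + (a * Hg + Lg * DX / 2 * max (a - B) 0) * γ t * ‖x (t + 1) - x t‖))
    + γ (T - 1) / (2 * η (T - 1)) * ‖F (x T) - F (xm T)‖ ^ 2
    + γ (T - 1) / (2 * τ (T - 1)) * ‖ell T - ellm T‖ ^ 2

/-!
Both OpConEx steps are prox steps, so the three-point inequality of each step bounds the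
primal–dual gap at `(x^{t+1}, λ^{t+1})` against any comparison point `(z, μ)` with `z ∈ X`,
`μ ≥ 0`, `‖μ‖ ≤ a` by telescoping distances, plus a coupling term that telescopes under
`γ_{t+1} θ_{t+1} = γ_t`, plus the extrapolation error and the linearization error of `g`. The
latter is at most `‖μ‖ (L_g/2 ‖Δx‖² + H_g ‖Δx‖)`; splitting `a = B + (a - B)` and using
`‖Δx‖ ≤ D_X` turns it into the terms of `N_T(a)`. The last coupling term is absorbed by Young's
inequality. Part (i) takes `(z, 0)` and uses monotonicity of `F`; part (ii) takes
`(x*, λ̂)` with `λ̂ = (‖λ*‖ + 1) [g(x̄)]₊ / ‖[g(x̄)]₊‖` and the saddle-point inequality.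
-/

section InnerProductSpace

variable {E : Type*} [NormedAddCommGroup E] [InnerProductSpace ℝ E]

theorem IsMinOn.inner_sub_le_of_prox {S : Set E} (hS : Convex ℝ S) {c x₀ u y : E} {η : ℝ}
    (hmin : IsMinOn (fun v => ⟪c, v⟫_ℝ + η / 2 * ‖v - x₀‖ ^ 2) S u) (hu : u ∈ S) (hy : y ∈ S) :
    ⟪c, u - y⟫_ℝ ≤ η / 2 * (‖y - x₀‖ ^ 2 - ‖u - x₀‖ ^ 2 - ‖y - u‖ ^ 2) := by
  have hderiv := ((innerSL ℝ c).hasFDerivAt (x := u)).add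
    (((hasFDerivAt_id u).sub_const x₀).norm_sq.const_mul (η / 2))
  have hfirst : 0 ≤ ⟪c, y - u⟫_ℝ + η / 2 * (2 * ⟪u - x₀, y - u⟫_ℝ) := by
    simpa only [add_apply, smul_apply, ContinuousLinearMap.comp_apply, innerSL_apply_apply, id,
      ContinuousLinearMap.id_apply, smul_eq_mul, nsmul_eq_mul, Nat.cast_ofNat] using
      hmin.localize.hasFDerivWithinAt_nonneg hderiv.hasFDerivWithinAt
        (sub_mem_posTangentConeAt_of_segment_subset (hS.segment_subset hu hy))
  have hpolar : ‖y - x₀‖ ^ 2 = ‖y - u‖ ^ 2 + 2 * ⟪u - x₀, y - u⟫_ℝ + ‖u - x₀‖ ^ 2 := by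
    rw [real_inner_comm, ← norm_add_sq_real, sub_add_sub_cancel]
  rw [hpolar, ← neg_sub y u, inner_neg_right]
  linarith

theorem mul_real_inner_le_div_mul_norm_sq_add (w z : E) {γ η : ℝ} (hγ : 0 ≤ γ) (hη : 0 < η) :
    γ * ⟪w, z⟫_ℝ ≤ γ / (2 * η) * ‖w‖ ^ 2 + γ * η / 2 * ‖z‖ ^ 2 := by
  have hsq : 0 ≤ ‖w - η • z‖ ^ 2 := sq_nonneg _
  rw [norm_sub_sq_real, inner_smul_right, norm_smul, Real.norm_of_nonneg hη.le] at hsq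
  have hyoung : ⟪w, z⟫_ℝ ≤ ‖w‖ ^ 2 / (2 * η) + η / 2 * ‖z‖ ^ 2 := by
    rw [div_add' _ _ _ (by positivity), le_div_iff₀ (by positivity)]
    nlinarith
  calc γ * ⟪w, z⟫_ℝ ≤ γ * (‖w‖ ^ 2 / (2 * η) + η / 2 * ‖z‖ ^ 2) :=
        mul_le_mul_of_nonneg_left hyoung hγ
    _ = γ / (2 * η) * ‖w‖ ^ 2 + γ * η / 2 * ‖z‖ ^ 2 := by ring

theorem Finset.sum_mul_inner_sub_eq_mul_inner_centerMass {ι : Type*} (s : Finset ι)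
    {w : ι → ℝ} (hw : ∑ i ∈ s, w i ≠ 0) (p : ι → E) (v z : E) :
    ∑ i ∈ s, w i * ⟪v, p i - z⟫_ℝ = (∑ i ∈ s, w i) * ⟪v, s.centerMass w p - z⟫_ℝ := by
  simp only [Finset.centerMass, inner_sub_right, inner_smul_right, inner_sum, mul_sub,
    Finset.sum_sub_distrib, ← Finset.sum_mul, ← mul_assoc, mul_inv_cancel₀ hw, one_mul]

end InnerProductSpace

theorem Finset.sum_range_mul_sub_le {c a : ℕ → ℝ} (hc : ∀ t, c (t + 1) ≤ c t)
    (ha : ∀ t, 0 ≤ a t) (T : ℕ) :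
    ∑ t ∈ Finset.range (T + 1), c t * (a t - a (t + 1)) ≤ c 0 * a 0 - c T * a (T + 1) := by
  induction T with
  | zero => simp [mul_sub]
  | succ T ih =>
    rw [Finset.sum_range_succ]
    nlinarith [mul_nonneg (sub_nonneg.2 (hc T)) (ha (T + 1))]

theorem mul_sq_le_add_max_mul {a B d D : ℝ} (hd : 0 ≤ d) (hdD : d ≤ D) :
    a * d ^ 2 ≤ B * d ^ 2 + D * max (a - B) 0 * d := by
  have h : (a - B) * d ≤ D * max (a - B) 0 :=
    calc (a - B) * d ≤ max (a - B) 0 * d := mul_le_mul_of_nonneg_right (le_max_left _ _) hd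
      _ ≤ max (a - B) 0 * D := mul_le_mul_of_nonneg_left hdD (le_max_right _ _)
      _ = D * max (a - B) 0 := mul_comm _ _
  nlinarith

section Euclidean

variable {m : ℕ}

def nonnegOrthant (m : ℕ) : Set (Euc m) := {μ | ∀ j, 0 ≤ μ j}

theorem convex_nonnegOrthant (m : ℕ) : Convex ℝ (nonnegOrthant m) := by
  intro μ hμ ν hν a b ha hb _ j
  simpa using add_nonneg (mul_nonneg ha (hμ j)) (mul_nonneg hb (hν j))

theorem inner_le_inner_of_mem_nonnegOrthant {v w μ : Euc m} (hvw : ∀ j, v j ≤ w j)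
    (hμ : μ ∈ nonnegOrthant m) : ⟪v, μ⟫_ℝ ≤ ⟪w, μ⟫_ℝ := by
  simp only [PiLp.inner_apply, RCLike.inner_apply, conj_trivial]
  exact Finset.sum_le_sum fun j _ => mul_le_mul_of_nonneg_left (hvw j) (hμ j)

theorem posPart_apply (v : Euc m) (j : Fin m) : posPart v j = max (v j) 0 := rfl

theorem real_inner_posPart_self (v : Euc m) : ⟪v, posPart v⟫_ℝ = ‖posPart v‖ ^ 2 := by
  rw [← real_inner_self_eq_norm_sq]
  simp only [PiLp.inner_apply, RCLike.inner_apply, conj_trivial, posPart_apply]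
  refine Finset.sum_congr rfl fun j _ => ?_
  rcases le_total (v j) 0 with h | h <;> simp [h]

theorem posPart_mem_nonnegOrthant (v : Euc m) : posPart v ∈ nonnegOrthant m :=
  fun j => le_max_right (v j) 0

theorem real_inner_le_norm_mul_norm_posPart {μ : Euc m} (hμ : μ ∈ nonnegOrthant m) (v : Euc m) :
    ⟪v, μ⟫_ℝ ≤ ‖μ‖ * ‖posPart v‖ :=
  calc ⟪v, μ⟫_ℝ ≤ ⟪posPart v, μ⟫_ℝ :=
        inner_le_inner_of_mem_nonnegOrthant (fun j => le_max_left (v j) 0) hμ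
    _ ≤ ‖μ‖ * ‖posPart v‖ := by rw [mul_comm]; exact real_inner_le_norm _ _

theorem exists_mem_nonnegOrthant_inner_eq (v : Euc m) {r : ℝ} (hr : 0 ≤ r) :
    ∃ μ ∈ nonnegOrthant m, ‖μ‖ ≤ r ∧ ⟪v, μ⟫_ℝ = r * ‖posPart v‖ := by
  rcases eq_or_ne ‖posPart v‖ 0 with h0 | h0
  · exact ⟨0, fun _ => le_rfl, by simpa using hr, by simp [h0]⟩
  refine ⟨(r / ‖posPart v‖) • posPart v, fun j => ?_, ?_, ?_⟩
  · exact mul_nonneg (by positivity) (posPart_mem_nonnegOrthant v j)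
  · rw [norm_smul, Real.norm_of_nonneg (by positivity), div_mul_cancel₀ _ h0]
  · rw [inner_smul_right, real_inner_posPart_self]
    field_simp

theorem nonpos_of_forall_inner_le {v ν : Euc m} (hν : ν ∈ nonnegOrthant m)
    (h : ∀ μ ∈ nonnegOrthant m, ⟪μ, v⟫_ℝ ≤ ⟪ν, v⟫_ℝ) (j : Fin m) : v j ≤ 0 := by
  have hj := h (ν + EuclideanSpace.single j 1) fun k => by
    rcases eq_or_ne k j with rfl | hk
    · simpa using add_nonneg (hν k) zero_le_one
    · simpa [hk] using hν k
  simpa [inner_add_left, EuclideanSpace.inner_single_left] using hj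

variable {E : Type*} [NormedAddCommGroup E] [InnerProductSpace ℝ E]

theorem real_inner_gradMul (G : Fin m → E) (μ : Euc m) (d : E) :
    ⟪gradMul G μ, d⟫_ℝ = ⟪gradT G d, μ⟫_ℝ := by
  simp [gradMul, gradT, sum_inner, inner_smul_left, PiLp.inner_apply]

theorem gradT_sub (G : Fin m → E) (d₁ d₂ : E) : gradT G (d₁ - d₂) = gradT G d₁ - gradT G d₂ := by
  ext j
  simp [gradT, inner_sub_right]

theorem real_inner_le_of_norm_le_quadratic {e μ : E} {Lg Hg a B d D : ℝ}
    (he : ‖e‖ ≤ Lg / 2 * d ^ 2 + Hg * d) (hμ : ‖μ‖ ≤ a) (hLg : 0 ≤ Lg) (hd : 0 ≤ d)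
    (hdD : d ≤ D) :
    ⟪e, μ⟫_ℝ ≤ a * Hg * d + B * Lg / 2 * d ^ 2 + Lg * D / 2 * max (a - B) 0 * d := by
  have hcs : ⟪e, μ⟫_ℝ ≤ (Lg / 2 * d ^ 2 + Hg * d) * a :=
    (real_inner_le_norm e μ).trans <|
      mul_le_mul he hμ (norm_nonneg μ) ((norm_nonneg e).trans he)
  nlinarith [mul_le_mul_of_nonneg_left (mul_sq_le_add_max_mul (a := a) (B := B) hd hdD) hLg]

theorem inner_add_gradT_le {v w μ : Euc m} {G : Fin m → E} {d : E}
    (h : ∀ j, v j + ⟪G j, d⟫_ℝ ≤ w j) (hμ : μ ∈ nonnegOrthant m) :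
    ⟪v + gradT G d, μ⟫_ℝ ≤ ⟪w, μ⟫_ℝ :=
  inner_le_inner_of_mem_nonnegOrthant (by simpa [gradT] using h) hμ

end Euclidean

variable {n m : ℕ}

/-- `xm t` and `ellm t` stand for `x^{t-1}` and `ℓ_g(x^{t-1})` (with `x^{-1} = x^0`), and
`ell t` for `ℓ_g(x^t)`. -/
structure IsOpConExRun (X : Set (Euc n)) (F : Euc n → Euc n) (g : Euc n → Euc m)
    (Gg : Euc n → Fin m → Euc n) (η τ θ : ℕ → ℝ) (x xm : ℕ → Euc n)
    (lam ell ellm : ℕ → Euc m) : Prop where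
  mem : ∀ t, x t ∈ X
  xm_zero : xm 0 = x 0
  xm_succ : ∀ t, xm (t + 1) = x t
  lam_zero : lam 0 = 0
  lam_mem : ∀ t, lam (t + 1) ∈ nonnegOrthant m
  ell_zero : ell 0 = g (x 0)
  ell_succ : ∀ t, ell (t + 1) = g (x t) + gradT (Gg (x t)) (x (t + 1) - x t)
  ellm_zero : ellm 0 = g (x 0)
  ellm_succ : ∀ t, ellm (t + 1) = ell t
  lam_isMinOn : ∀ t, IsMinOn
    (fun μ => ⟪-((1 + θ t) • ell t - θ t • ellm t), μ⟫_ℝ + τ t / 2 * ‖μ - lam t‖ ^ 2)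
    (nonnegOrthant m) (lam (t + 1))
  x_isMinOn : ∀ t, IsMinOn
    (fun y => ⟪(1 + θ t) • F (x t) - θ t • F (xm t) + gradMul (Gg (x t)) (lam (t + 1)), y⟫_ℝ
      + η t / 2 * ‖y - x t‖ ^ 2) X (x (t + 1))

def primalDualGap (F : Euc n → Euc n) (g : Euc n → Euc m) (z : Euc n) (μ : Euc m)
    (y : Euc n) (ν : Euc m) : ℝ :=
  ⟪F y, y - z⟫_ℝ + ⟪g y, μ⟫_ℝ - ⟪g z, ν⟫_ℝ

/-- Weighted by `γ_t θ_t`, this telescopes along a run when `γ_{t+1} θ_{t+1} = γ_t`. -/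
def opconexCoupling (F : Euc n → Euc n) (x xm : ℕ → Euc n) (lam ell ellm : ℕ → Euc m)
    (z : Euc n) (μ : Euc m) (s : ℕ) : ℝ :=
  ⟪F (x s) - F (xm s), x s - z⟫_ℝ + ⟪ell s - ellm s, μ - lam s⟫_ℝ

theorem primalDualGap_ge {F : Euc n → Euc n} {g : Euc n → Euc m} {y z : Euc n} {ν : Euc m}
    (hmono : 0 ≤ ⟪F y - F z, y - z⟫_ℝ) (hgz : ∀ j, g z j ≤ 0) (hν : ν ∈ nonnegOrthant m)
    (μ : Euc m) : ⟪F z, y - z⟫_ℝ + ⟪g y, μ⟫_ℝ ≤ primalDualGap F g z μ y ν := by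
  have hsign : ⟪g z, ν⟫_ℝ ≤ 0 := by
    simpa using inner_le_inner_of_mem_nonnegOrthant (w := 0) hgz hν
  rw [primalDualGap]
  rw [inner_sub_left] at hmono
  linarith

namespace IsOpConExRun

variable {X : Set (Euc n)} {F : Euc n → Euc n} {g : Euc n → Euc m} {Gg : Euc n → Fin m → Euc n}
  {η τ θ : ℕ → ℝ} {x xm : ℕ → Euc n} {lam ell ellm : ℕ → Euc m}

theorem primalDualGap_eq (run : IsOpConExRun X F g Gg η τ θ x xm lam ell ellm)
    (t : ℕ) (z : Euc n) (μ : Euc m) :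
    primalDualGap F g z μ (x (t + 1)) (lam (t + 1))
      = ⟪(1 + θ t) • F (x t) - θ t • F (xm t) + gradMul (Gg (x t)) (lam (t + 1)),
          x (t + 1) - z⟫_ℝ
        + ⟪-((1 + θ t) • ell t - θ t • ellm t), lam (t + 1) - μ⟫_ℝ
        + (opconexCoupling F x xm lam ell ellm z μ (t + 1)
          - θ t * opconexCoupling F x xm lam ell ellm z μ t)
        + θ t * (⟪F (x t) - F (xm t), x t - x (t + 1)⟫_ℝ
          + ⟪ell t - ellm t, lam (t + 1) - lam t⟫_ℝ)
        + ⟪g (x (t + 1)) - ell (t + 1), μ⟫_ℝ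
        + ⟪g (x t) + gradT (Gg (x t)) (z - x t) - g z, lam (t + 1)⟫_ℝ := by
  have hlin : gradT (Gg (x t)) (x (t + 1) - z)
      = ell (t + 1) - (g (x t) + gradT (Gg (x t)) (z - x t)) := by
    rw [run.ell_succ, ← sub_sub_sub_cancel_right (x (t + 1)) z (x t), gradT_sub]
    abel
  rw [primalDualGap, opconexCoupling, opconexCoupling, run.xm_succ, run.ellm_succ,
    inner_add_left, real_inner_gradMul, hlin]
  simp only [inner_sub_left, inner_sub_right, inner_neg_left, inner_add_left,
    real_inner_smul_left]
  ring

theorem primalDualGap_le (run : IsOpConExRun X F g Gg η τ θ x xm lam ell ellm)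
    (hX : Convex ℝ X) {Lg Hg DX B a : ℝ} (hLg : 0 ≤ Lg) {t : ℕ} {z : Euc n} {μ : Euc m}
    (hsub : ∀ j, g (x t) j + ⟪Gg (x t) j, z - x t⟫_ℝ ≤ g z j)
    (hsmooth : ‖g (x (t + 1)) - g (x t) - gradT (Gg (x t)) (x (t + 1) - x t)‖
      ≤ Lg / 2 * ‖x (t + 1) - x t‖ ^ 2 + Hg * ‖x (t + 1) - x t‖)
    (hdiam : ‖x (t + 1) - x t‖ ≤ DX) (hz : z ∈ X) (hμ : μ ∈ nonnegOrthant m) (ha : ‖μ‖ ≤ a) :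
    primalDualGap F g z μ (x (t + 1)) (lam (t + 1))
      ≤ η t / 2 * (‖z - x t‖ ^ 2 - ‖z - x (t + 1)‖ ^ 2)
        + τ t / 2 * (‖μ - lam t‖ ^ 2 - ‖μ - lam (t + 1)‖ ^ 2)
        + (opconexCoupling F x xm lam ell ellm z μ (t + 1)
          - θ t * opconexCoupling F x xm lam ell ellm z μ t)
        + (θ t * ⟪F (x t) - F (xm t), x t - x (t + 1)⟫_ℝ
          + θ t * ⟪ell t - ellm t, lam (t + 1) - lam t⟫_ℝ
          - (η t - B * Lg) / 2 * ‖x (t + 1) - x t‖ ^ 2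
          - τ t / 2 * ‖lam t - lam (t + 1)‖ ^ 2
          + (a * Hg + Lg * DX / 2 * max (a - B) 0) * ‖x (t + 1) - x t‖) := by
  have hxprox := (run.x_isMinOn t).inner_sub_le_of_prox hX (run.mem (t + 1)) hz
  have hlamprox := (run.lam_isMinOn t).inner_sub_le_of_prox (convex_nonnegOrthant m)
    (run.lam_mem t) hμ
  have hlin : ⟪g (x (t + 1)) - ell (t + 1), μ⟫_ℝ
      ≤ a * Hg * ‖x (t + 1) - x t‖ + B * Lg / 2 * ‖x (t + 1) - x t‖ ^ 2
        + Lg * DX / 2 * max (a - B) 0 * ‖x (t + 1) - x t‖ :=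
    real_inner_le_of_norm_le_quadratic (by rwa [run.ell_succ, ← sub_sub]) ha hLg
      (norm_nonneg _) hdiam
  have hsubgrad := inner_add_gradT_le hsub (run.lam_mem t)
  rw [run.primalDualGap_eq, norm_sub_rev (lam t), inner_sub_left _ (g z)]
  linarith

theorem sum_mul_primalDualGap_le (run : IsOpConExRun X F g Gg η τ θ x xm lam ell ellm)
    (hX : Convex ℝ X) {γ : ℕ → ℝ} {Lg Hg DX B a : ℝ} (hLg : 0 ≤ Lg)
    (hγ : ∀ t, 0 ≤ γ t) (hη : ∀ t, 0 < η t) (hτ : ∀ t, 0 < τ t)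
    (hC₁ : ∀ t, γ (t + 1) * η (t + 1) ≤ γ t * η t)
    (hC₂ : ∀ t, γ (t + 1) * τ (t + 1) ≤ γ t * τ t)
    (hC₃ : ∀ t, γ (t + 1) * θ (t + 1) = γ t)
    (hgconv : ∀ x ∈ X, ∀ y ∈ X, ∀ j, g x j + ⟪Gg x j, y - x⟫_ℝ ≤ g y j)
    (hgsmooth : ∀ x₁ ∈ X, ∀ x₂ ∈ X,
      ‖g x₁ - g x₂ - gradT (Gg x₂) (x₁ - x₂)‖ ≤ Lg / 2 * ‖x₁ - x₂‖ ^ 2 + Hg * ‖x₁ - x₂‖)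
    (hdiam : ∀ t, ‖x (t + 1) - x t‖ ≤ DX) {T : ℕ} (hT : 1 ≤ T) {z : Euc n} {μ : Euc m}
    (hz : z ∈ X) (hμ : μ ∈ nonnegOrthant m) (ha : ‖μ‖ ≤ a) :
    ∑ t ∈ Finset.range T, γ t * primalDualGap F g z μ (x (t + 1)) (lam (t + 1))
      ≤ γ 0 * η 0 / 2 * ‖z - x 0‖ ^ 2 + γ 0 * τ 0 / 2 * ‖μ‖ ^ 2
        + opconexNT γ η τ θ Lg Hg DX B F x xm lam ell ellm T a := by
  set W := opconexCoupling F x xm lam ell ellm z μ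
  have hstep : ∀ t, γ t * primalDualGap F g z μ (x (t + 1)) (lam (t + 1))
      ≤ γ t * η t / 2 * (‖z - x t‖ ^ 2 - ‖z - x (t + 1)‖ ^ 2)
        + γ t * τ t / 2 * (‖μ - lam t‖ ^ 2 - ‖μ - lam (t + 1)‖ ^ 2)
        + (γ (t + 1) * θ (t + 1) * W (t + 1) - γ t * θ t * W t)
        + (γ t * θ t * ⟪F (x t) - F (xm t), x t - x (t + 1)⟫_ℝ
          + γ t * θ t * ⟪ell t - ellm t, lam (t + 1) - lam t⟫_ℝ
          - γ t * (η t - B * Lg) / 2 * ‖x (t + 1) - x t‖ ^ 2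
          - γ t * τ t / 2 * ‖lam t - lam (t + 1)‖ ^ 2
          + (a * Hg + Lg * DX / 2 * max (a - B) 0) * γ t * ‖x (t + 1) - x t‖) := by
    intro t
    have h := mul_le_mul_of_nonneg_left (run.primalDualGap_le hX (B := B) hLg
      (hgconv _ (run.mem t) _ hz) (hgsmooth _ (run.mem (t + 1)) _ (run.mem t)) (hdiam t) hz hμ ha)
      (hγ t)
    rw [hC₃ t]
    linarith
  obtain ⟨T, rfl⟩ : ∃ T', T = T' + 1 := ⟨T - 1, by omega⟩
  have hsum := Finset.sum_le_sum fun t (_ : t ∈ Finset.range (T + 1)) => hstep t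
  rw [Finset.sum_add_distrib, Finset.sum_add_distrib, Finset.sum_add_distrib,
    Finset.sum_range_sub (fun t => γ t * θ t * W t)] at hsum
  have hx := Finset.sum_range_mul_sub_le (c := fun t => γ t * η t / 2)
    (a := fun t => ‖z - x t‖ ^ 2) (fun t => by linarith [hC₁ t]) (fun t => sq_nonneg _) T
  have hlam := Finset.sum_range_mul_sub_le (c := fun t => γ t * τ t / 2)
    (a := fun t => ‖μ - lam t‖ ^ 2) (fun t => by linarith [hC₂ t]) (fun t => sq_nonneg _) T
  have hW0 : W 0 = 0 := by simp [W, opconexCoupling, run.xm_zero, run.ell_zero, run.ellm_zero]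
  have hF := mul_real_inner_le_div_mul_norm_sq_add
    (F (x (T + 1)) - F (xm (T + 1))) (x (T + 1) - z) (hγ T) (hη T)
  have hell := mul_real_inner_le_div_mul_norm_sq_add
    (ell (T + 1) - ellm (T + 1)) (μ - lam (T + 1)) (hγ T) (hτ T)
  rw [hC₃, hW0, mul_zero, sub_zero] at hsum
  rw [run.lam_zero, sub_zero] at hlam
  rw [norm_sub_rev (x (T + 1)) z] at hF
  simp only [opconexNT, Nat.add_sub_cancel, W, opconexCoupling] at hsum ⊢
  linarith

end IsOpConExRun

section WeightedAverage

variable {X : Set (Euc n)} {F : Euc n → Euc n} {g : Euc n → Euc m} {γ : ℕ → ℝ}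
  {x : ℕ → Euc n} {lam : ℕ → Euc m} {T : ℕ}

theorem mul_inner_centerMass_sub_le_sum_mul_primalDualGap (hγ : ∀ t, 0 ≤ γ t)
    (hΓ : ∑ t ∈ Finset.range T, γ t ≠ 0)
    (hmono : ∀ x₁ ∈ X, ∀ x₂ ∈ X, 0 ≤ ⟪F x₁ - F x₂, x₁ - x₂⟫_ℝ)
    (hx : ∀ t, x (t + 1) ∈ X) (hlam : ∀ t, lam (t + 1) ∈ nonnegOrthant m)
    {z : Euc n} (hz : z ∈ X) (hgz : ∀ j, g z j ≤ 0) :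
    (∑ t ∈ Finset.range T, γ t) * ⟪F z, (Finset.range T).centerMass γ (fun t => x (t + 1)) - z⟫_ℝ
      ≤ ∑ t ∈ Finset.range T, γ t * primalDualGap F g z 0 (x (t + 1)) (lam (t + 1)) := by
  rw [← Finset.sum_mul_inner_sub_eq_mul_inner_centerMass _ hΓ]
  refine Finset.sum_le_sum fun t _ => mul_le_mul_of_nonneg_left ?_ (hγ t)
  simpa using primalDualGap_ge (hmono _ (hx t) _ hz) hgz (hlam t) 0

theorem exists_mul_norm_posPart_le_sum_mul_primalDualGap (hX : Convex ℝ X)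
    {Gg : Euc n → Fin m → Euc n} (hγ : ∀ t, 0 ≤ γ t) (hΓ : 0 < ∑ t ∈ Finset.range T, γ t)
    (hmono : ∀ x₁ ∈ X, ∀ x₂ ∈ X, 0 ≤ ⟪F x₁ - F x₂, x₁ - x₂⟫_ℝ)
    (hgconv : ∀ x ∈ X, ∀ y ∈ X, ∀ j, g x j + ⟪Gg x j, y - x⟫_ℝ ≤ g y j)
    (hx : ∀ t, x (t + 1) ∈ X) (hlam : ∀ t, lam (t + 1) ∈ nonnegOrthant m)
    {xstar : Euc n} {lamstar : Euc m} (hxstar : xstar ∈ X) (hlamstar : lamstar ∈ nonnegOrthant m)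
    (hsaddle₁ : ∀ x ∈ X,
      ⟪F xstar, xstar⟫_ℝ + ⟪lamstar, g xstar⟫_ℝ ≤ ⟪F xstar, x⟫_ℝ + ⟪lamstar, g x⟫_ℝ)
    (hsaddle₂ : ∀ μ ∈ nonnegOrthant m, ⟪μ, g xstar⟫_ℝ ≤ ⟪lamstar, g xstar⟫_ℝ) :
    ∃ μ ∈ nonnegOrthant m, ‖μ‖ ≤ ‖lamstar‖ + 1 ∧
      (∑ t ∈ Finset.range T, γ t)
          * ‖posPart (g ((Finset.range T).centerMass γ (fun t => x (t + 1))))‖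
        ≤ ∑ t ∈ Finset.range T, γ t * primalDualGap F g xstar μ (x (t + 1)) (lam (t + 1)) := by
  set xbar := (Finset.range T).centerMass γ (fun t => x (t + 1))
  have hxbar : xbar ∈ X := hX.centerMass_mem (fun t _ => hγ t) hΓ (fun t _ => hx t)
  obtain ⟨μ, hμ, hμnorm, hμinner⟩ :=
    exists_mem_nonnegOrthant_inner_eq (g xbar) (r := ‖lamstar‖ + 1) (by positivity)
  refine ⟨μ, hμ, hμnorm, ?_⟩
  have hgap : ‖posPart (g xbar)‖ ≤ ⟪F xstar, xbar - xstar⟫_ℝ + ⟪g xbar, μ⟫_ℝ := by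
    have hcs : 0 ≤ ⟪lamstar, g xstar⟫_ℝ := by
      simpa using hsaddle₂ 0 fun _ => le_rfl
    have hviol := real_inner_le_norm_mul_norm_posPart hlamstar (g xbar)
    rw [real_inner_comm] at hviol
    rw [inner_sub_right, hμinner]
    linarith [hsaddle₁ xbar hxbar]
  -- The subgradient inequality at `x̄` replaces Jensen: its linear part has zero weighted mean.
  have hstep : ∀ t, ⟪F xstar, x (t + 1) - xstar⟫_ℝ + ⟪g xbar, μ⟫_ℝ
      + ⟪gradMul (Gg xbar) μ, x (t + 1) - xbar⟫_ℝ
      ≤ primalDualGap F g xstar μ (x (t + 1)) (lam (t + 1)) := by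
    intro t
    have hsub := inner_add_gradT_le (hgconv _ hxbar _ (hx t)) hμ
    have hfeas := nonpos_of_forall_inner_le hlamstar hsaddle₂
    rw [inner_add_left, ← real_inner_gradMul] at hsub
    linarith [primalDualGap_ge (hmono _ (hx t) _ hxstar) hfeas (hlam t) μ]
  calc (∑ t ∈ Finset.range T, γ t) * ‖posPart (g xbar)‖
      ≤ (∑ t ∈ Finset.range T, γ t) * (⟪F xstar, xbar - xstar⟫_ℝ + ⟪g xbar, μ⟫_ℝ) :=
        mul_le_mul_of_nonneg_left hgap hΓ.le
    _ = ∑ t ∈ Finset.range T, γ t * (⟪F xstar, x (t + 1) - xstar⟫_ℝ + ⟪g xbar, μ⟫_ℝ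
          + ⟪gradMul (Gg xbar) μ, x (t + 1) - xbar⟫_ℝ) := by
        simp only [mul_add, Finset.sum_add_distrib, ← Finset.sum_mul,
          Finset.sum_mul_inner_sub_eq_mul_inner_centerMass _ hΓ.ne', xbar, sub_self,
          inner_zero_right, mul_zero, add_zero]
    _ ≤ ∑ t ∈ Finset.range T, γ t * primalDualGap F g xstar μ (x (t + 1)) (lam (t + 1)) :=
        Finset.sum_le_sum fun t _ => mul_le_mul_of_nonneg_left (hstep t) (hγ t)

end WeightedAverage

theorem opconex_working_bound_with_B_general
    {n m : ℕ}
    (X : Set (Euc n)) (hXconv : Convex ℝ X)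
    (F : Euc n → Euc n)
    (hFmono : ∀ x₁ ∈ X, ∀ x₂ ∈ X, 0 ≤ ⟪F x₁ - F x₂, x₁ - x₂⟫_ℝ)
    (g : Euc n → Euc m) (Gg : Euc n → Fin m → Euc n)
    (Lg Hg : ℝ) (hLg : 0 ≤ Lg)
    (hgconv : ∀ x ∈ X, ∀ y ∈ X, ∀ j, g x j + ⟪Gg x j, y - x⟫_ℝ ≤ g y j)
    (hgsmooth : ∀ x₁ ∈ X, ∀ x₂ ∈ X,
      ‖g x₁ - g x₂ - gradT (Gg x₂) (x₁ - x₂)‖ ≤ Lg / 2 * ‖x₁ - x₂‖ ^ 2 + Hg * ‖x₁ - x₂‖)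
    (xstar : Euc n) (lamstar : Euc m) (hxstar : xstar ∈ X) (hlamstar : ∀ j, 0 ≤ lamstar j)
    (hsaddle₁ : ∀ x ∈ X,
      ⟪F xstar, xstar⟫_ℝ + ⟪lamstar, g xstar⟫_ℝ ≤ ⟪F xstar, x⟫_ℝ + ⟪lamstar, g x⟫_ℝ)
    (hsaddle₂ : ∀ lam' : Euc m, (∀ j, 0 ≤ lam' j) →
      ⟪lam', g xstar⟫_ℝ ≤ ⟪lamstar, g xstar⟫_ℝ)
    (T : ℕ) (hT : 1 ≤ T)
    (γ η τ θ : ℕ → ℝ)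
    (hγ : ∀ t, 0 < γ t) (hη : ∀ t, 0 < η t) (hτ : ∀ t, 0 < τ t)
    (hC₁ : ∀ t, γ (t + 1) * η (t + 1) ≤ γ t * η t)
    (hC₂ : ∀ t, γ (t + 1) * τ (t + 1) ≤ γ t * τ t)
    (hC₃ : ∀ t, γ (t + 1) * θ (t + 1) = γ t)
    (x xm : ℕ → Euc n) (lam : ℕ → Euc m) (ell ellm : ℕ → Euc m)
    (hx0 : x 0 ∈ X) (hxm0 : xm 0 = x 0) (hxm : ∀ t, xm (t + 1) = x t)
    (hlam0 : lam 0 = 0)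
    (hell0 : ell 0 = g (x 0))
    (hell : ∀ t, ell (t + 1) = g (x t) + gradT (Gg (x t)) (x (t + 1) - x t))
    (hellm0 : ellm 0 = g (x 0)) (hellm : ∀ t, ellm (t + 1) = ell t)
    (hlamPos : ∀ t, ∀ j, 0 ≤ lam (t + 1) j)
    (hlamMin : ∀ t, ∀ lam' : Euc m, (∀ j, 0 ≤ lam' j) →
      ⟪-((1 + θ t) • ell t - θ t • ellm t), lam (t + 1)⟫_ℝ
          + τ t / 2 * ‖lam (t + 1) - lam t‖ ^ 2
        ≤ ⟪-((1 + θ t) • ell t - θ t • ellm t), lam'⟫_ℝ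
          + τ t / 2 * ‖lam' - lam t‖ ^ 2)
    (hxS : ∀ t, x (t + 1) ∈ X)
    (hxMin : ∀ t, ∀ y ∈ X,
      ⟪(1 + θ t) • F (x t) - θ t • F (xm t) + gradMul (Gg (x t)) (lam (t + 1)),
          x (t + 1)⟫_ℝ + η t / 2 * ‖x (t + 1) - x t‖ ^ 2
        ≤ ⟪(1 + θ t) • F (x t) - θ t • F (xm t) + gradMul (Gg (x t)) (lam (t + 1)),
          y⟫_ℝ + η t / 2 * ‖y - x t‖ ^ 2)
    (DX : ℝ) (hDX : IsGreatest {d | ∃ x₁ ∈ X, ∃ x₂ ∈ X, d = ‖x₁ - x₂‖} DX)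
    (B : ℝ) :
    (∀ z ∈ X, (∀ j, g z j ≤ 0) →
      (∑ t ∈ Finset.range T, γ t) *
          ⟪F z, (∑ t ∈ Finset.range T, γ t)⁻¹ • (∑ t ∈ Finset.range T, γ t • x (t + 1)) - z⟫_ℝ
        ≤ γ 0 * η 0 / 2 * ‖z - x 0‖ ^ 2
          + opconexNT γ η τ θ Lg Hg DX B F x xm lam ell ellm T 0)
    ∧ (∑ t ∈ Finset.range T, γ t) *
          ‖posPart (g ((∑ t ∈ Finset.range T, γ t)⁻¹ • (∑ t ∈ Finset.range T, γ t • x (t + 1))))‖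
        ≤ γ 0 * η 0 / 2 * ‖xstar - x 0‖ ^ 2 + γ 0 * τ 0 / 2 * (‖lamstar‖ + 1) ^ 2
          + opconexNT γ η τ θ Lg Hg DX B F x xm lam ell ellm T (‖lamstar‖ + 1) := by
  have run : IsOpConExRun X F g Gg η τ θ x xm lam ell ellm :=
    { mem := fun t => t.casesOn hx0 hxS
      xm_zero := hxm0, xm_succ := hxm, lam_zero := hlam0, lam_mem := hlamPos
      ell_zero := hell0, ell_succ := hell, ellm_zero := hellm0, ellm_succ := hellm
      lam_isMinOn := fun t μ hμ => hlamMin t μ hμ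
      x_isMinOn := fun t y hy => hxMin t y hy }
  have hdiam : ∀ t, ‖x (t + 1) - x t‖ ≤ DX := fun t => hDX.2 ⟨_, run.mem _, _, run.mem _, rfl⟩
  have hΓ : 0 < ∑ t ∈ Finset.range T, γ t :=
    Finset.sum_pos (fun t _ => hγ t) (Finset.nonempty_range_iff.2 (by omega))
  have hsum {z : Euc n} {μ : Euc m} {a : ℝ} := run.sum_mul_primalDualGap_le hXconv (B := B) hLg
    (fun t => (hγ t).le) hη hτ hC₁ hC₂ hC₃ hgconv hgsmooth hdiam hT (z := z) (μ := μ) (a := a)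
  constructor
  · intro z hz hgz
    refine (mul_inner_centerMass_sub_le_sum_mul_primalDualGap (fun t => (hγ t).le) hΓ.ne' hFmono
      hxS run.lam_mem hz hgz).trans ?_
    simpa using hsum hz (fun _ => le_rfl) norm_zero.le
  · obtain ⟨μ, hμ, hμnorm, hgap⟩ := exists_mul_norm_posPart_le_sum_mul_primalDualGap hXconv
      (fun t => (hγ t).le) hΓ hFmono hgconv hxS run.lam_mem hxstar hlamstar hsaddle₁ hsaddle₂
    have hμsq : γ 0 * τ 0 / 2 * ‖μ‖ ^ 2 ≤ γ 0 * τ 0 / 2 * (‖lamstar‖ + 1) ^ 2 := by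
      have := (hγ 0).le; have := (hτ 0).le
      gcongr
    exact hgap.trans (by linarith [hsum hxstar hμ hμnorm])

/-- **Lemma 2.5 of the paper.** Working bound for the OpConEx method with a free
parameter `B ≥ 0` replacing knowledge of `‖λ*‖`. -/
theorem opconex_working_bound_with_B
    {n m : ℕ}
    (X : Set (Euc n)) (hXne : X.Nonempty) (hXcomp : IsCompact X) (hXconv : Convex ℝ X)
    (F : Euc n → Euc n) (L H : ℝ) (hL : 0 ≤ L) (hH : 0 ≤ H)
    (hFmono : ∀ x₁ ∈ X, ∀ x₂ ∈ X, 0 ≤ ⟪F x₁ - F x₂, x₁ - x₂⟫_ℝ)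
    (hFlip : ∀ x₁ ∈ X, ∀ x₂ ∈ X, ‖F x₁ - F x₂‖ ≤ L * ‖x₁ - x₂‖ + H)
    (g : Euc n → Euc m) (Gg : Euc n → Fin m → Euc n)
    (Mg Lg Hg : ℝ) (hMg : 0 ≤ Mg) (hLg : 0 ≤ Lg) (hHg : 0 ≤ Hg)
    (hgconv : ∀ x ∈ X, ∀ y ∈ X, ∀ j, g x j + ⟪Gg x j, y - x⟫_ℝ ≤ g y j)
    (hglip : ∀ x₁ ∈ X, ∀ x₂ ∈ X, ‖g x₁ - g x₂‖ ≤ Mg * ‖x₁ - x₂‖)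
    (hGgbd : ∀ x ∈ X, ∀ μ : Euc m, ‖gradMul (Gg x) μ‖ ≤ Mg * ‖μ‖)
    (hgsmooth : ∀ x₁ ∈ X, ∀ x₂ ∈ X,
      ‖g x₁ - g x₂ - gradT (Gg x₂) (x₁ - x₂)‖ ≤ Lg / 2 * ‖x₁ - x₂‖ ^ 2 + Hg * ‖x₁ - x₂‖)
    (hXtne : ∃ x ∈ X, ∀ j, g x j ≤ 0)
    (xstar : Euc n) (lamstar : Euc m) (hxstar : xstar ∈ X) (hlamstar : ∀ j, 0 ≤ lamstar j)
    (hsaddle₁ : ∀ x ∈ X,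
      ⟪F xstar, xstar⟫_ℝ + ⟪lamstar, g xstar⟫_ℝ ≤ ⟪F xstar, x⟫_ℝ + ⟪lamstar, g x⟫_ℝ)
    (hsaddle₂ : ∀ lam' : Euc m, (∀ j, 0 ≤ lam' j) →
      ⟪lam', g xstar⟫_ℝ ≤ ⟪lamstar, g xstar⟫_ℝ)
    (T : ℕ) (hT : 1 ≤ T)
    (γ η τ θ : ℕ → ℝ)
    (hγ : ∀ t, 0 < γ t) (hη : ∀ t, 0 < η t) (hτ : ∀ t, 0 < τ t) (hθ : ∀ t, 0 ≤ θ t)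
    (hC₁ : ∀ t, γ (t + 1) * η (t + 1) ≤ γ t * η t)
    (hC₂ : ∀ t, γ (t + 1) * τ (t + 1) ≤ γ t * τ t)
    (hC₃ : ∀ t, γ (t + 1) * θ (t + 1) = γ t)
    (x xm : ℕ → Euc n) (lam : ℕ → Euc m) (ell ellm : ℕ → Euc m)
    (hx0 : x 0 ∈ X) (hxm0 : xm 0 = x 0) (hxm : ∀ t, xm (t + 1) = x t)
    (hlam0 : lam 0 = 0)
    (hell0 : ell 0 = g (x 0))
    (hell : ∀ t, ell (t + 1) = g (x t) + gradT (Gg (x t)) (x (t + 1) - x t))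
    (hellm0 : ellm 0 = g (x 0)) (hellm : ∀ t, ellm (t + 1) = ell t)
    (hlamPos : ∀ t, ∀ j, 0 ≤ lam (t + 1) j)
    (hlamMin : ∀ t, ∀ lam' : Euc m, (∀ j, 0 ≤ lam' j) →
      ⟪-((1 + θ t) • ell t - θ t • ellm t), lam (t + 1)⟫_ℝ
          + τ t / 2 * ‖lam (t + 1) - lam t‖ ^ 2
        ≤ ⟪-((1 + θ t) • ell t - θ t • ellm t), lam'⟫_ℝ
          + τ t / 2 * ‖lam' - lam t‖ ^ 2)
    (hxS : ∀ t, x (t + 1) ∈ X)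
    (hxMin : ∀ t, ∀ y ∈ X,
      ⟪(1 + θ t) • F (x t) - θ t • F (xm t) + gradMul (Gg (x t)) (lam (t + 1)),
          x (t + 1)⟫_ℝ + η t / 2 * ‖x (t + 1) - x t‖ ^ 2
        ≤ ⟪(1 + θ t) • F (x t) - θ t • F (xm t) + gradMul (Gg (x t)) (lam (t + 1)),
          y⟫_ℝ + η t / 2 * ‖y - x t‖ ^ 2)
    (DX : ℝ) (hDX : IsGreatest {d | ∃ x₁ ∈ X, ∃ x₂ ∈ X, d = ‖x₁ - x₂‖} DX)
    (B : ℝ) (hB : 0 ≤ B) :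
    (∀ z ∈ X, (∀ j, g z j ≤ 0) →
      (∑ t ∈ Finset.range T, γ t) *
          ⟪F z, (∑ t ∈ Finset.range T, γ t)⁻¹ • (∑ t ∈ Finset.range T, γ t • x (t + 1)) - z⟫_ℝ
        ≤ γ 0 * η 0 / 2 * ‖z - x 0‖ ^ 2
          + opconexNT γ η τ θ Lg Hg DX B F x xm lam ell ellm T 0)
    ∧ (∑ t ∈ Finset.range T, γ t) *
          ‖posPart (g ((∑ t ∈ Finset.range T, γ t)⁻¹ • (∑ t ∈ Finset.range T, γ t • x (t + 1))))‖
        ≤ γ 0 * η 0 / 2 * ‖xstar - x 0‖ ^ 2 + γ 0 * τ 0 / 2 * (‖lamstar‖ + 1) ^ 2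
          + opconexNT γ η τ θ Lg Hg DX B F x xm lam ell ellm T (‖lamstar‖ + 1) :=
  opconex_working_bound_with_B_general X hXconv F hFmono g Gg Lg Hg hLg hgconv hgsmooth xstar
    lamstar hxstar hlamstar hsaddle₁ hsaddle₂ T hT γ η τ θ hγ hη hτ hC₁ hC₂ hC₃ x xm lam ell ellm
    hx0 hxm0 hxm hlam0 hell0 hell hellm0 hellm hlamPos hlamMin hxS hxMin DX hDX B
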